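/- arXiv:2207.12634 — 2 statements merged into one kernel-verified Lean document; each statement's English description precedes it below -/
import Mathlib

section
/- Let 1<p<∞. If the composition operator C_φ induced by an analytic self-map φ of the unit disk is an isometry on the analytic Besov space B_p (with norm ‖f‖_{B_p} = |f(0)| + ‖f‖_p), then φ(0)=0 and ‖f∘φ‖_p = ‖f‖_p for every f ∈ B_p. -/
/-!
Adding a constant to `f` changes neither membership in `B_p` nor the seminorm, so the isometry
identity reads `‖f (φ 0) + c‖ + ‖f ∘ φ‖_p = ‖f 0 + c‖ + ‖f‖_p` for every `c`. Taking
`c = -f 0` and `c = -f (φ 0)` and adding the two identities forces `f (φ 0) = f 0` and equal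
seminorms. The identity map lies in `B_p` because `(1 - |z|²) ^ (p - 2)` is integrable on the
disk for `p > 1`, and for it the first equality is `φ 0 = 0`.
-/

open MeasureTheory

/-- The open unit disk in the complex plane. -/
noncomputable def unitDisk : Set ℂ := Metric.ball (0 : ℂ) 1

/-- Lebesgue area measure on ℂ normalized so that the unit disk has measure 1,
i.e., (1/π) times two-dimensional Lebesgue measure. -/
noncomputable def dA : Measure ℂ := (ENNReal.ofReal Real.pi)⁻¹ • (volume : Measure ℂ)

/-- φ is an analytic self-map of the unit disk. -/
def IsAnalyticSelfMap (φ : ℂ → ℂ) : Prop :=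
  DifferentiableOn ℂ φ unitDisk ∧ Set.MapsTo φ unitDisk unitDisk

/-- The Besov integrand ‖f'(z)‖^p (1-|z|²)^{p-2}. -/
noncomputable def besovIntegrand (p : ℝ) (f : ℂ → ℂ) (z : ℂ) : ℝ :=
  ‖deriv f z‖ ^ p * (1 - ‖z‖ ^ 2) ^ (p - 2)

/-- Membership in the analytic Besov space B_p: f is analytic on 𝔻 and the
Besov integral is finite (expressed as integrability of the nonnegative integrand). -/
def MemBesov (p : ℝ) (f : ℂ → ℂ) : Prop :=
  DifferentiableOn ℂ f unitDisk ∧ IntegrableOn (besovIntegrand p f) unitDisk dA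

/-- The Besov semi-norm ‖f‖_p = (∫_𝔻 |f'|^p (1-|z|²)^{p-2} dA)^{1/p}. -/
noncomputable def besovSemi (p : ℝ) (f : ℂ → ℂ) : ℝ :=
  (∫ z in unitDisk, besovIntegrand p f z ∂dA) ^ (1 / p)

/-- The Besov norm ‖f‖_{B_p} = |f(0)| + ‖f‖_p. -/
noncomputable def besovNorm (p : ℝ) (f : ℂ → ℂ) : ℝ := ‖f 0‖ + besovSemi p f

/-- The composition operator C_φ is an isometry on B_p. -/
def IsBesovIsometry (p : ℝ) (φ : ℂ → ℂ) : Prop :=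
  ∀ f : ℂ → ℂ, MemBesov p f → MemBesov p (f ∘ φ) ∧ besovNorm p (f ∘ φ) = besovNorm p f

/-- φ is a rotation of the disk: φ(z) = λ z for a unimodular constant λ. -/
def IsRotation (φ : ℂ → ℂ) : Prop :=
  ∃ lam : ℂ, ‖lam‖ = 1 ∧ ∀ z ∈ unitDisk, φ z = lam * z

open Module Set

theorem integrableOn_mul_one_sub_sq_rpow {q : ℝ} (hq : -1 < q) :
    IntegrableOn (fun r : ℝ => r * (1 - r ^ 2) ^ q) (Ioc 0 1) := by
  have hq1 : 0 < q + 1 := by linarith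
  refine intervalIntegral.integrableOn_deriv_of_nonneg
    (g := fun r : ℝ => -(1 - r ^ 2) ^ (q + 1) / (2 * (q + 1))) ?_ (fun r hr => ?_) (fun r hr => ?_)
  · have hcont : ContinuousOn (fun r : ℝ => (1 - r ^ 2) ^ (q + 1)) (Icc 0 1) :=
      (Continuous.continuousOn (by fun_prop)).rpow_const fun _ _ => Or.inr hq1.le
    exact hcont.neg.div_const _
  · have hr2 : 1 - r ^ 2 ≠ 0 := by nlinarith [hr.1, hr.2]
    have h := ((hasDerivAt_pow 2 r).const_sub 1).rpow_const (p := q + 1) (Or.inl hr2)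
    refine (h.neg.div_const (2 * (q + 1))).congr_deriv ?_
    rw [add_sub_cancel_right]
    field_simp
    push_cast
    ring
  · have : 0 ≤ 1 - r ^ 2 := by nlinarith [hr.1, hr.2]
    exact mul_nonneg hr.1.le (Real.rpow_nonneg this q)

theorem integrableOn_ball_one_sub_norm_sq_rpow {E : Type*} [NormedAddCommGroup E]
    [NormedSpace ℝ E] [MeasurableSpace E] [BorelSpace E] [FiniteDimensional ℝ E]
    (μ : Measure E) [μ.IsAddHaarMeasure] (hE : 2 ≤ finrank ℝ E) {q : ℝ} (hq : -1 < q) :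
    IntegrableOn (fun x : E => (1 - ‖x‖ ^ 2) ^ q) (Metric.ball 0 1) μ := by
  have : Nontrivial E := Module.nontrivial_of_finrank_pos (R := ℝ) (by omega)
  set g : ℝ → ℝ := (Iio 1).indicator fun r => (1 - r ^ 2) ^ q
  have hg : (Metric.ball (0 : E) 1).indicator (fun x => (1 - ‖x‖ ^ 2) ^ q) = fun x => g ‖x‖ := by
    ext x
    simp [g, indicator]
  -- In polar coordinates the weight `r ^ (n - 1)` with `n ≥ 2` is dominated by `r` on `(0, 1)`.
  rw [← integrable_indicator_iff measurableSet_ball, hg, integrable_fun_norm_addHaar]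
  have hIoo : IntegrableOn (fun y : ℝ => y ^ (finrank ℝ E - 1) • g y) (Ioo 0 1) := by
    refine ((integrableOn_mul_one_sub_sq_rpow hq).mono_set Ioo_subset_Ioc_self).mono' ?_ ?_
    · have hmeas : Measurable fun r : ℝ => (1 - r ^ 2) ^ q := by fun_prop
      exact ((measurable_id.pow_const _).smul
        (hmeas.indicator measurableSet_Iio)).aestronglyMeasurable
    · refine (ae_restrict_iff' measurableSet_Ioo).2 (ae_of_all _ fun y hy => ?_)
      have hy2 : 0 ≤ (1 - y ^ 2) ^ q := Real.rpow_nonneg (by nlinarith [hy.1, hy.2]) q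
      have hpow : y ^ (finrank ℝ E - 1) ≤ y := by
        simpa using pow_le_pow_of_le_one hy.1.le hy.2.le (show 1 ≤ finrank ℝ E - 1 by omega)
      simp only [g, indicator_of_mem (mem_Iio.2 hy.2), smul_eq_mul, norm_mul, norm_pow,
        Real.norm_of_nonneg hy.1.le, Real.norm_of_nonneg hy2]
      exact mul_le_mul_of_nonneg_right hpow hy2
  refine hIoo.of_forall_sdiff_eq_zero measurableSet_Ioi fun y hy => ?_
  have hy1 : y ∉ Iio 1 := fun h => hy.2 ⟨hy.1, h⟩
  simp only [g, indicator_of_notMem hy1, smul_zero]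

instance isAddHaarMeasure_dA : dA.IsAddHaarMeasure :=
  .smul _ (by simp) (by simp [Real.pi_pos])

theorem eq_and_eq_of_forall_norm_add_add_eq {E : Type*} [NormedAddCommGroup E] {a b : E}
    {s t : ℝ} (h : ∀ c, ‖a + c‖ + s = ‖b + c‖ + t) : a = b ∧ s = t := by
  have hb := h (-b)
  have ha := h (-a)
  simp only [← sub_eq_add_neg, sub_self, norm_zero, zero_add] at ha hb
  have hab : ‖a - b‖ = 0 := by linarith [norm_sub_rev a b, norm_nonneg (a - b)]
  exact ⟨sub_eq_zero.1 (norm_eq_zero.1 hab), by linarith⟩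

theorem besovIntegrand_add_const (p : ℝ) (f : ℂ → ℂ) (c : ℂ) :
    besovIntegrand p (fun z => f z + c) = besovIntegrand p f := by
  funext z
  simp only [besovIntegrand, deriv_add_const]

theorem MemBesov.add_const {p : ℝ} {f : ℂ → ℂ} (hf : MemBesov p f) (c : ℂ) :
    MemBesov p (fun z => f z + c) :=
  ⟨fun z hz => (hf.1 z hz).add_const c, by rw [besovIntegrand_add_const]; exact hf.2⟩

theorem besovSemi_add_const (p : ℝ) (f : ℂ → ℂ) (c : ℂ) :
    besovSemi p (fun z => f z + c) = besovSemi p f := by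
  simp only [besovSemi, besovIntegrand_add_const]

theorem memBesov_id {p : ℝ} (hp : 1 < p) : MemBesov p fun z => z := by
  refine ⟨differentiableOn_id, ?_⟩
  have h : besovIntegrand p (fun z => z) = fun z => (1 - ‖z‖ ^ 2) ^ (p - 2) := by
    funext z
    simp [besovIntegrand]
  rw [h]
  exact integrableOn_ball_one_sub_norm_sq_rpow dA (by simp) (by linarith)

namespace IsBesovIsometry

variable {p : ℝ} {φ f : ℂ → ℂ}

theorem norm_add_const_add_besovSemi (hiso : IsBesovIsometry p φ) (hf : MemBesov p f) (c : ℂ) :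
    ‖f (φ 0) + c‖ + besovSemi p (f ∘ φ) = ‖f 0 + c‖ + besovSemi p f := by
  have h := (hiso _ (hf.add_const c)).2
  rwa [besovNorm, besovNorm, Function.comp_def, besovSemi_add_const, besovSemi_add_const] at h

theorem apply_map_zero (hiso : IsBesovIsometry p φ) (hf : MemBesov p f) : f (φ 0) = f 0 :=
  (eq_and_eq_of_forall_norm_add_add_eq (hiso.norm_add_const_add_besovSemi hf)).1

theorem besovSemi_comp (hiso : IsBesovIsometry p φ) (hf : MemBesov p f) :
    besovSemi p (f ∘ φ) = besovSemi p f :=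
  (eq_and_eq_of_forall_norm_add_add_eq (hiso.norm_add_const_add_besovSemi hf)).2

end IsBesovIsometry

theorem isometry_fixes_origin_and_preserves_seminorm_general
    (p : ℝ) (hp : 1 < p) (φ : ℂ → ℂ)
    (hiso : IsBesovIsometry p φ) :
    φ 0 = 0 ∧ ∀ f : ℂ → ℂ, MemBesov p f → besovSemi p (f ∘ φ) = besovSemi p f :=
  ⟨hiso.apply_map_zero (memBesov_id hp), fun _ hf => hiso.besovSemi_comp hf⟩

/-- If C_φ is an isometry on B_p (1<p<∞), then φ(0)=0 and
‖f∘φ‖_p = ‖f‖_p for every f ∈ B_p. -/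
theorem isometry_fixes_origin_and_preserves_seminorm
    (p : ℝ) (hp : 1 < p) (φ : ℂ → ℂ)
    (hφ : IsAnalyticSelfMap φ) (hiso : IsBesovIsometry p φ) :
    φ 0 = 0 ∧ ∀ f : ℂ → ℂ, MemBesov p f → besovSemi p (f ∘ φ) = besovSemi p f :=
  isometry_fixes_origin_and_preserves_seminorm_general p hp φ hiso
end

section
/- Let 1<p<∞ with p≠2. If the composition operator C_φ induced by an analytic self-map φ of the unit disk is an isometry on the analytic Besov space B_p, then the weighted composition operator W_{φ',φ} is an isometry on the weighted Bergman space A^p_{p-2}; that is, for every f analytic on 𝔻 with ∫_𝔻 |f(z)|^p (1-|z|²)^{p-2} dA(z) < ∞, one has ∫_𝔻 |φ'(z)|^p |f(φ(z))|^p (1-|z|²)^{p-2} dA(z) = ∫_𝔻 |f(z)|^p (1-|z|²)^{p-2} dA(z). -/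
/-!
A primitive `F` of `f` lies in `B_p`, its Besov integrand being the `A^p_{p-2}` integrand of `f`,
and by the chain rule the Besov integrand of `F ∘ φ` is `|φ'|^p |f ∘ φ|^p (1-|z|²)^{p-2}`. So it
suffices that `C_φ` preserves the Besov semi-norm `s` of `F`. Subtracting a constant changes the
value at `0` but not `s`; applying the isometry to `F - F(0)` and to `F - F(φ(0))` gives
`s(F ∘ φ) + a = s(F)` and `s(F ∘ φ) = a + s(F)` with `a = |F(φ(0)) - F(0)| ≥ 0`, whence
`s(F ∘ φ) = s(F)`.
-/

open MeasureTheory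

section Besov

variable {p : ℝ} {f φ : ℂ → ℂ}

lemma besovIntegrand_sub_const (p : ℝ) (f : ℂ → ℂ) (c : ℂ) :
    besovIntegrand p (fun z => f z - c) = besovIntegrand p f := by
  funext z
  simp only [besovIntegrand, deriv_sub_const]

lemma besovSemi_sub_const (p : ℝ) (f : ℂ → ℂ) (c : ℂ) :
    besovSemi p (fun z => f z - c) = besovSemi p f := by
  simp only [besovSemi, besovIntegrand_sub_const]

lemma MemBesov.sub_const (hf : MemBesov p f) (c : ℂ) : MemBesov p (fun z => f z - c) :=
  ⟨hf.1.sub_const c, by rw [besovIntegrand_sub_const]; exact hf.2⟩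

lemma besovIntegrand_nonneg {z : ℂ} (hz : z ∈ unitDisk) : 0 ≤ besovIntegrand p f z := by
  have hz1 : ‖z‖ < 1 := mem_ball_zero_iff.mp hz
  have hw : 0 ≤ 1 - ‖z‖ ^ 2 := by nlinarith [norm_nonneg z]
  exact mul_nonneg (Real.rpow_nonneg (norm_nonneg _) _) (Real.rpow_nonneg hw _)

lemma setIntegral_besovIntegrand_nonneg (p : ℝ) (f : ℂ → ℂ) :
    0 ≤ ∫ z in unitDisk, besovIntegrand p f z ∂dA :=
  setIntegral_nonneg measurableSet_ball fun _ hz => besovIntegrand_nonneg hz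

lemma setIntegral_besovIntegrand_eq_of_besovSemi_eq {g : ℂ → ℂ} (hp : p ≠ 0)
    (h : besovSemi p g = besovSemi p f) :
    ∫ z in unitDisk, besovIntegrand p g z ∂dA = ∫ z in unitDisk, besovIntegrand p f z ∂dA :=
  (Real.rpow_left_inj (setIntegral_besovIntegrand_nonneg p g)
    (setIntegral_besovIntegrand_nonneg p f) (one_div_ne_zero hp)).mp h

lemma besovIntegrand_comp_of_hasDerivAt {F : ℂ → ℂ} (hφ : IsAnalyticSelfMap φ)
    (hF : ∀ w ∈ unitDisk, HasDerivAt F (f w) w) {z : ℂ} (hz : z ∈ unitDisk) :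
    besovIntegrand p (F ∘ φ) z = ‖deriv φ z‖ ^ p * ‖f (φ z)‖ ^ p * (1 - ‖z‖ ^ 2) ^ (p - 2) := by
  have hφz : HasDerivAt φ (deriv φ z) z :=
    (hφ.1.differentiableAt (Metric.isOpen_ball.mem_nhds hz)).hasDerivAt
  have hcomp : HasDerivAt (F ∘ φ) (f (φ z) * deriv φ z) z := (hF (φ z) (hφ.2 hz)).comp z hφz
  rw [besovIntegrand, hcomp.deriv, norm_mul, Real.mul_rpow (norm_nonneg _) (norm_nonneg _)]
  ring

lemma IsBesovIsometry.besovSemi_comp_s4 (hiso : IsBesovIsometry p φ) (hf : MemBesov p f) :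
    besovSemi p (f ∘ φ) = besovSemi p f := by
  have comp_sub (c : ℂ) : (fun z => f z - c) ∘ φ = fun z => (f ∘ φ) z - c := rfl
  have h₀ := (hiso _ (hf.sub_const (f 0))).2
  have h₁ := (hiso _ (hf.sub_const (f (φ 0)))).2
  simp only [besovNorm, comp_sub, besovSemi_sub_const, Function.comp_apply, sub_self,
    norm_zero, zero_add] at h₀ h₁
  rw [norm_sub_rev] at h₁
  rw [Function.comp_def]
  linarith [norm_nonneg (f (φ 0) - f 0)]

end Besov

theorem weighted_composition_isometry_general
    (p : ℝ) (hp1 : 1 < p) (φ : ℂ → ℂ)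
    (hφ : IsAnalyticSelfMap φ) (hiso : IsBesovIsometry p φ) :
    ∀ f : ℂ → ℂ, DifferentiableOn ℂ f unitDisk →
      IntegrableOn (fun z => ‖f z‖ ^ p * (1 - ‖z‖ ^ 2) ^ (p - 2)) unitDisk dA →
      ∫ z in unitDisk, ‖deriv φ z‖ ^ p * ‖f (φ z)‖ ^ p * (1 - ‖z‖ ^ 2) ^ (p - 2) ∂dA
        = ∫ z in unitDisk, ‖f z‖ ^ p * (1 - ‖z‖ ^ 2) ^ (p - 2) ∂dA := by
  intro f hf hint
  obtain ⟨F, hF⟩ := hf.isExactOn_ball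
  have hFf : Set.EqOn (besovIntegrand p F) (fun z => ‖f z‖ ^ p * (1 - ‖z‖ ^ 2) ^ (p - 2))
      unitDisk := fun z hz => by rw [besovIntegrand, (hF z hz).deriv]
  have hFmem : MemBesov p F :=
    ⟨fun z hz => (hF z hz).differentiableAt.differentiableWithinAt,
      hint.congr_fun hFf.symm measurableSet_ball⟩
  calc _ = ∫ z in unitDisk, besovIntegrand p (F ∘ φ) z ∂dA :=
        setIntegral_congr_fun measurableSet_ball fun z hz =>
          (besovIntegrand_comp_of_hasDerivAt hφ hF hz).symm
    _ = ∫ z in unitDisk, besovIntegrand p F z ∂dA :=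
        setIntegral_besovIntegrand_eq_of_besovSemi_eq (by positivity)
          (hiso.besovSemi_comp_s4 hFmem)
    _ = _ := setIntegral_congr_fun measurableSet_ball hFf

/-- If C_φ is an isometry on B_p (1<p<∞, p≠2), then the weighted
composition operator W_{φ',φ} is an isometry on the weighted Bergman space
A^p_{p-2}. -/
theorem weighted_composition_isometry
    (p : ℝ) (hp1 : 1 < p) (hp2 : p ≠ 2) (φ : ℂ → ℂ)
    (hφ : IsAnalyticSelfMap φ) (hiso : IsBesovIsometry p φ) :
    ∀ f : ℂ → ℂ, DifferentiableOn ℂ f unitDisk →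
      IntegrableOn (fun z => ‖f z‖ ^ p * (1 - ‖z‖ ^ 2) ^ (p - 2)) unitDisk dA →
      ∫ z in unitDisk, ‖deriv φ z‖ ^ p * ‖f (φ z)‖ ^ p * (1 - ‖z‖ ^ 2) ^ (p - 2) ∂dA
        = ∫ z in unitDisk, ‖f z‖ ^ p * (1 - ‖z‖ ^ 2) ^ (p - 2) ∂dA :=
  weighted_composition_isometry_general p hp1 φ hφ hiso
end
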